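/- arXiv:1502.02741 — 5 statements merged into one kernel-verified Lean document; each statement's English description precedes it below -/
import Mathlib

section
/- Let $w_0,\dots,w_{m-1}$ be distinct complex numbers, $x_0,\dots,x_{m-1}$ nonzero, $h_t = \sum_{i=0}^{m-1} w_i^t x_i$, $N \geq 2m$, and let $H$ be the $(N-m)\times m$ Hankel matrix $H_{j,k} = h_{j+k}$ and $b = (h_m, h_{m+1},\dots,h_{N-1})^T$. Then a vector $q = (q_0,\dots,q_{m-1})^T$ satisfies $Hq = -b$ if and only if the monic polynomial $q(z) = z^m + \sum_{k=0}^{m-1} q_k z^k$ vanishes at every $w_i$, $i = 0,\dots,m-1$; moreover such a $q$ is unique. -/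
/-!
Row `j` of `H q + b` equals `∑ i, x i * w i ^ j * p(w i)`, where `p` is the monic polynomial with
lower coefficients `q`. Since `N - m ≥ m`, the first `m` rows form a transposed Vandermonde system
in the unknowns `x i * p(w i)`, so `H q = -b` exactly when `p` vanishes at every node. The only
such `p` is `∏ i, (X - w i)`, because two of them differ by a polynomial of degree `< m` with `m`
roots.
-/

open Matrix Polynomial Finset Function

section CommSemiring

variable {R : Type*} [CommSemiring R]

theorem sum_powerSum_mul_add_powerSum {ι : Type*} [Fintype ι] {m : ℕ} (w x : ι → R)
    (q : Fin m → R) (j : ℕ) :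
    ∑ k : Fin m, (∑ i, w i ^ (j + k) * x i) * q k + ∑ i, w i ^ (m + j) * x i =
      ∑ i, x i * (w i ^ m + ∑ k : Fin m, q k * w i ^ (k : ℕ)) * w i ^ j := by
  simp only [sum_mul]
  rw [sum_comm, ← sum_add_distrib]
  refine sum_congr rfl fun i _ => ?_
  rw [mul_add, add_mul, mul_sum, sum_mul, add_comm]
  congr 1
  · ring
  · exact sum_congr rfl fun k _ => by ring

theorem Polynomial.Monic.eval_eq_pow_add_sum_fin {p : R[X]} (hp : p.Monic) {m : ℕ}
    (hdeg : p.natDegree = m) (z : R) :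
    p.eval z = z ^ m + ∑ k : Fin m, p.coeff k * z ^ (k : ℕ) := by
  conv_lhs => rw [hp.as_sum, hdeg]
  simp [eval_finsetSum, Fin.sum_univ_eq_sum_range (fun k => p.coeff k * z ^ k)]

end CommSemiring

section IsDomain

variable {R : Type*} [CommRing R] [IsDomain R]

theorem forall_sum_mul_mul_pow_eq_zero_iff {m n : ℕ} (hmn : m ≤ n) {w x p : Fin m → R}
    (hw : Injective w) (hx : ∀ i, x i ≠ 0) :
    (∀ j : Fin n, ∑ i, x i * p i * w i ^ (j : ℕ) = 0) ↔ ∀ i, p i = 0 := by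
  refine ⟨fun h i => ?_, fun h j => by simp [h]⟩
  have hxp : (fun i => x i * p i) = 0 :=
    eq_zero_of_forall_pow_sum_mul_pow_eq_zero hw fun j => h (Fin.castLE hmn j)
  exact (mul_eq_zero.mp (congrFun hxp i)).resolve_left (hx i)

theorem existsUnique_monic_vanishing {m : ℕ} {w : Fin m → R} (hw : Injective w) :
    ∃! q : Fin m → R, ∀ i, w i ^ m + ∑ k, q k * w i ^ (k : ℕ) = 0 := by
  set P : R[X] := ∏ i, (X - C (w i))
  have hP : P.Monic := monic_prod_of_monic _ _ fun i _ => monic_X_sub_C (w i)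
  have hPdeg : P.natDegree = m := by simp [P]
  have hPw : ∀ i, w i ^ m + ∑ k : Fin m, P.coeff k * w i ^ (k : ℕ) = 0 := fun i => by
    rw [← hP.eval_eq_pow_add_sum_fin hPdeg, eval_prod]
    exact prod_eq_zero (mem_univ i) (by simp)
  refine ⟨fun k => P.coeff k, hPw, fun q hq => sub_eq_zero.mp <|
    eq_zero_of_forall_index_sum_mul_pow_eq_zero hw
      (v := q - fun k : Fin m => P.coeff k) fun i => ?_⟩
  simp only [Pi.sub_apply, sub_mul, sum_sub_distrib]
  linear_combination hq i - hPw i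

end IsDomain

theorem stmt_4 (m N : ℕ) (hN : 2 * m ≤ N)
    (w x : Fin m → ℂ) (hw : Function.Injective w) (hx : ∀ i, x i ≠ 0)
    (h : ℕ → ℂ) (hh : ∀ t : ℕ, h t = ∑ i, w i ^ t * x i)
    (H : Matrix (Fin (N - m)) (Fin m) ℂ)
    (hH : ∀ j k, H j k = h ((j : ℕ) + (k : ℕ)))
    (b : Fin (N - m) → ℂ) (hb : ∀ j, b j = h (m + (j : ℕ)))
    (q : Fin m → ℂ) :
    (H.mulVec q = -b ↔ ∀ i, w i ^ m + ∑ k, q k * w i ^ (k : ℕ) = 0) ∧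
      (∃! q' : Fin m → ℂ, H.mulVec q' = -b) := by
  have hsolve : ∀ q' : Fin m → ℂ,
      H.mulVec q' = -b ↔ ∀ i, w i ^ m + ∑ k, q' k * w i ^ (k : ℕ) = 0 := fun q' => by
    rw [← forall_sum_mul_mul_pow_eq_zero_iff (by omega : m ≤ N - m) hw hx, funext_iff]
    refine forall_congr' fun j => ?_
    rw [← sum_powerSum_mul_add_powerSum, Pi.neg_apply, eq_neg_iff_add_eq_zero]
    simp only [mulVec, dotProduct, hH, hh, hb]
  exact ⟨hsolve q, by simpa only [hsolve] using existsUnique_monic_vanishing hw⟩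
end

section
/- Let $p(z) = z^m + \sum_{k=0}^{m-1} p_k z^k$ be a monic polynomial with companion matrix $C^p$ (the $m \times m$ matrix with ones on the subdiagonal and last column $(-p_0,\dots,-p_{m-1})^T$). Let $w_0,\dots,w_{m-1}$ be distinct complex numbers, $x_0,\dots,x_{m-1}$ nonzero, $h_t = \sum_i w_i^t x_i$, $N \geq 2m$, and let $H(s)$ be the $(N-m)\times m$ Hankel matrix with entries $h_{j+k+s}$, $s \in \{0,1\}$. Then $H(0) C^p = H(1)$ if and only if $p(z) = \prod_{i=0}^{m-1}(z - w_i)$. -/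
/-! The defect sequence `d_j = h_{j+m} + ∑ l, p_l h_{j+l}` of an exponential sum
`h_t = ∑ i, w_i^t x_i` is again an exponential sum, with weights `p(w_i) x_i`.
Column `k < m - 1` of `H(0) C^p` is column `k + 1` of `H(0)`, which is column `k` of `H(1)`;
comparing last columns, `H(0) C^p = H(1)` says exactly that `d_j = 0` for `j < N - m`.
As `N - m ≥ m` and the `w_i` are distinct, the Vandermonde matrix is invertible, so
`p(w_i) x_i = 0`: every `w_i` is a root of `p`, and a monic polynomial of degree `m` with `m`
distinct roots `w_i` is `∏ i, (z - w_i)`. -/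

open Matrix

namespace Prony

open Polynomial

variable {R : Type*} [CommRing R]

def companion {m : ℕ} (p : Fin m → R) : Matrix (Fin m) (Fin m) R :=
  of fun i j => if (j : ℕ) = m - 1 then -p i else if (i : ℕ) = (j : ℕ) + 1 then 1 else 0

def hankel {r m : ℕ} (h : ℕ → R) (s : ℕ) : Matrix (Fin r) (Fin m) R :=
  of fun j k => h ((j : ℕ) + (k : ℕ) + s)

section companion

variable {ι : Type*} {n : ℕ} (A : Matrix ι (Fin (n + 1)) R) (p : Fin (n + 1) → R)

theorem mul_companion_apply_castSucc (j : ι) (k : Fin n) :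
    (A * companion p) j k.castSucc = A j k.succ := by
  rw [mul_apply, Finset.sum_eq_single k.succ]
  · simp [companion, k.isLt.ne]
  · intro l _ hl
    have : (l : ℕ) ≠ k + 1 := fun h => hl (Fin.ext h)
    simp [companion, k.isLt.ne, this]
  · simp

theorem mul_companion_apply_last (j : ι) :
    (A * companion p) j (Fin.last n) = -∑ l, p l * A j l := by
  simp [mul_apply, companion, mul_comm]

end companion

theorem hankel_mul_companion_eq_iff {r n : ℕ} (h : ℕ → R) (p : Fin (n + 1) → R) :
    (hankel h 0 : Matrix (Fin r) (Fin (n + 1)) R) * companion p = hankel h 1 ↔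
      ∀ j : Fin r, h (j + (n + 1)) + ∑ l, p l * h (j + l) = 0 := by
  refine ⟨fun H j => ?_, fun H => ?_⟩
  · have := congr_fun₂ H j (Fin.last n)
    rw [mul_companion_apply_last] at this
    simp only [hankel, of_apply, Fin.val_last, add_zero] at this
    rw [← add_assoc, ← this, neg_add_cancel]
  · ext j k
    induction k using Fin.lastCases with
    | cast k =>
      rw [mul_companion_apply_castSucc]
      simp [hankel, add_assoc]
    | last =>
      rw [mul_companion_apply_last, neg_eq_iff_add_eq_zero, add_comm, ← H j]
      simp [hankel, add_assoc]

noncomputable def monicOfCoeffs {m : ℕ} (p : Fin m → R) : R[X] :=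
  X ^ m + ∑ k, C (p k) * X ^ (k : ℕ)

theorem eval_monicOfCoeffs {m : ℕ} (p : Fin m → R) (z : R) :
    (monicOfCoeffs p).eval z = z ^ m + ∑ k, p k * z ^ (k : ℕ) := by
  simp [monicOfCoeffs, eval_finsetSum]

theorem isMonicOfDegree_monicOfCoeffs [Nontrivial R] {m : ℕ} (p : Fin m → R) :
    IsMonicOfDegree (monicOfCoeffs p) m := by
  have hlow := degree_sum_fin_lt p
  refine ⟨?_, monic_X_pow_add hlow⟩
  rw [monicOfCoeffs, natDegree_add_eq_left_of_degree_lt, natDegree_X_pow]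
  rwa [degree_X_pow]

theorem monicOfCoeffs_eq_prod_iff [IsDomain R] {m : ℕ} (hm : m ≠ 0) {p w : Fin m → R}
    (hw : Function.Injective w) :
    monicOfCoeffs p = ∏ i, (X - C (w i)) ↔ ∀ i, (monicOfCoeffs p).IsRoot (w i) := by
  refine ⟨fun H i => ?_, fun H => ?_⟩
  · rw [H, IsRoot, eval_prod]
    exact Finset.prod_eq_zero (Finset.mem_univ i) (by simp)
  · have hprod : IsMonicOfDegree (∏ i, (X - C (w i))) m :=
      ⟨by simp, monic_prod_X_sub_C _ _⟩
    rw [← sub_eq_zero]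
    refine eq_zero_of_natDegree_lt_card_of_eval_eq_zero _ hw (fun i => ?_) ?_
    · rw [eval_sub, H i, eval_prod, Finset.prod_eq_zero (Finset.mem_univ i) (by simp), sub_zero]
    · simpa using (isMonicOfDegree_monicOfCoeffs p).natDegree_sub_lt hm hprod

def expSum {m : ℕ} (w x : Fin m → R) (t : ℕ) : R :=
  ∑ i, w i ^ t * x i

theorem expSum_add_sum_mul_expSum {m : ℕ} (w x p : Fin m → R) (j : ℕ) :
    expSum w x (j + m) + ∑ l, p l * expSum w x (j + l) =
      expSum w (fun i => (monicOfCoeffs p).eval (w i) * x i) j := by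
  simp only [expSum, eval_monicOfCoeffs, Finset.mul_sum]
  rw [Finset.sum_comm, ← Finset.sum_add_distrib]
  refine Finset.sum_congr rfl fun i _ => ?_
  simp only [add_mul, mul_add, Finset.sum_mul, Finset.mul_sum]
  congr 1
  · ring
  · exact Finset.sum_congr rfl fun l _ => by ring

theorem forall_expSum_eq_zero_iff [IsDomain R] {m r : ℕ} {w c : Fin m → R}
    (hw : Function.Injective w) (hmr : m ≤ r) :
    (∀ j : Fin r, expSum w c j = 0) ↔ c = 0 := by
  refine ⟨fun H => eq_zero_of_forall_pow_sum_mul_pow_eq_zero hw fun j => ?_, ?_⟩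
  · simpa [expSum, mul_comm] using H (j.castLE hmr)
  · rintro rfl j
    simp [expSum]

end Prony

theorem stmt_6 (m N : ℕ) (hm : 0 < m) (hN : 2 * m ≤ N)
    (w x : Fin m → ℂ) (hw : Function.Injective w) (hx : ∀ i, x i ≠ 0)
    (h : ℕ → ℂ) (hh : ∀ t : ℕ, h t = ∑ i, w i ^ t * x i)
    (p : Fin m → ℂ)
    (Cp : Matrix (Fin m) (Fin m) ℂ)
    (hCp : ∀ i j, Cp i j =
      if (j : ℕ) = m - 1 then -p i else if (i : ℕ) = (j : ℕ) + 1 then 1 else 0) :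
    (Matrix.of fun (j : Fin (N - m)) (k : Fin m) => h ((j : ℕ) + (k : ℕ))) * Cp =
        (Matrix.of fun (j : Fin (N - m)) (k : Fin m) => h ((j : ℕ) + (k : ℕ) + 1)) ↔
      ∀ z : ℂ, z ^ m + ∑ k, p k * z ^ (k : ℕ) = ∏ i, (z - w i) := by
  open Prony Polynomial in
  obtain ⟨n, rfl⟩ : ∃ n, m = n + 1 := ⟨m - 1, by omega⟩
  obtain rfl : Cp = companion p := Matrix.ext hCp
  obtain rfl : h = expSum w x := funext hh
  have hroot (i) : (monicOfCoeffs p).eval (w i) * x i = 0 ↔ (monicOfCoeffs p).IsRoot (w i) := by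
    simp [hx i]
  change hankel _ 0 * companion p = hankel _ 1 ↔ _
  rw [hankel_mul_companion_eq_iff]
  simp_rw [expSum_add_sum_mul_expSum]
  rw [forall_expSum_eq_zero_iff hw (by omega), funext_iff]
  simp_rw [Pi.zero_apply, hroot]
  rw [← monicOfCoeffs_eq_prod_iff n.succ_ne_zero hw]
  refine ⟨fun H z => ?_, fun H => Polynomial.funext fun z => ?_⟩
  · simpa [eval_monicOfCoeffs, eval_prod] using congr_arg (eval z) H
  · simpa [eval_monicOfCoeffs, eval_prod] using H z
end

section
/- Let $f: [0,1) \to \mathbb{R}$ satisfy $f(\xi) = f(1-\xi)$ for $\xi \in (0,1)$ and $f$ strictly decreasing on $[0,1/2]$. Let $m$ be odd, $m > 1$, and $\xi \in [0,1)$ with $\xi \neq 0$ and $\xi \neq 1/2$. Then the $m$ values $f\left(\frac{\xi + i}{m} \bmod 1\right)$, $i = 0,\dots,m-1$, are pairwise distinct. -/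
/-!
Since `f` is symmetric about `1/2` and injective on `[0, 1/2]`, two points of `[0, 1)` with the
same value are equal or add up to `1`. The points `(ξ + i) / m` are distinct, and two of them add up
to `1` only if `2 ξ = m - i - j` is an integer, i.e. only if `ξ = 0` or `ξ = 1/2`.
-/

open Set

lemma min_one_sub_mem_Icc {x : ℝ} (hx : x ∈ Ico 0 1) : min x (1 - x) ∈ Icc 0 (1 / 2) := by
  obtain ⟨hx0, hx1⟩ := hx
  constructor
  · exact le_min hx0 (by linarith)
  · rcases le_total x (1 / 2) with h | h
    · exact (min_le_left _ _).trans h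
    · exact (min_le_right _ _).trans (by linarith)

lemma apply_min_one_sub {f : ℝ → ℝ} (hsym : ∀ ξ ∈ Ioo (0 : ℝ) 1, f ξ = f (1 - ξ))
    {x : ℝ} (hx : x ∈ Ico 0 1) : f (min x (1 - x)) = f x := by
  rcases le_total x (1 - x) with h | h
  · rw [min_eq_left h]
  · rw [min_eq_right h, hsym x ⟨by linarith [hx.1], hx.2⟩]

lemma eq_or_add_eq_one_of_min_one_sub_eq {x y : ℝ} (h : min x (1 - x) = min y (1 - y)) :
    x = y ∨ x + y = 1 := by
  rcases min_choice x (1 - x) with hx | hx <;> rcases min_choice y (1 - y) with hy | hy <;>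
    rw [hx, hy] at h
  · exact .inl h
  · exact .inr (by linarith)
  · exact .inr (by linarith)
  · exact .inl (by linarith)

lemma eq_or_add_eq_one_of_apply_eq {f : ℝ → ℝ} (hsym : ∀ ξ ∈ Ioo (0 : ℝ) 1, f ξ = f (1 - ξ))
    (hinj : InjOn f (Icc 0 (1 / 2))) {x y : ℝ} (hx : x ∈ Ico 0 1) (hy : y ∈ Ico 0 1)
    (h : f x = f y) : x = y ∨ x + y = 1 :=
  eq_or_add_eq_one_of_min_one_sub_eq <|
    hinj (min_one_sub_mem_Icc hx) (min_one_sub_mem_Icc hy) <| by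
      rw [apply_min_one_sub hsym hx, apply_min_one_sub hsym hy, h]

lemma eq_zero_or_eq_half_of_two_mul_eq_intCast {ξ : ℝ} (hξ : ξ ∈ Ico 0 1) {k : ℤ}
    (hk : 2 * ξ = k) : ξ = 0 ∨ ξ = 1 / 2 := by
  have hk0 : 0 ≤ k := by exact_mod_cast hk ▸ (by linarith [hξ.1] : (0 : ℝ) ≤ 2 * ξ)
  have hk2 : k < 2 := by exact_mod_cast hk ▸ (by linarith [hξ.2] : 2 * ξ < 2)
  interval_cases k
  · exact .inl (by norm_num at hk; linarith)
  · exact .inr (by norm_num at hk; linarith)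

lemma add_natCast_div_mem_Ico {ξ : ℝ} (hξ : ξ ∈ Ico 0 1) {m i : ℕ} (hi : i < m) :
    (ξ + i) / m ∈ Ico 0 1 := by
  have hm : (0 : ℝ) < m := by exact_mod_cast (Nat.zero_le i).trans_lt hi
  have hi' : (i : ℝ) + 1 ≤ m := by exact_mod_cast hi
  exact ⟨div_nonneg (by linarith [hξ.1]) hm.le, (div_lt_one hm).2 (by linarith [hξ.2])⟩

theorem stmt_7_general (m : ℕ) (f : ℝ → ℝ)
    (hsym : ∀ ξ ∈ Set.Ioo (0:ℝ) 1, f ξ = f (1 - ξ))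
    (hmono : StrictAntiOn f (Set.Icc (0:ℝ) (1/2)))
    (ξ : ℝ) (hξ : ξ ∈ Set.Ico (0:ℝ) 1) (h0 : ξ ≠ 0) (hhalf : ξ ≠ 1/2) :
    Function.Injective (fun i : Fin m => f ((ξ + (i : ℕ)) / m)) := by
  intro i j h
  have hm0 : (m : ℝ) ≠ 0 := by exact_mod_cast (Nat.zero_le _).trans_lt i.2 |>.ne'
  rcases eq_or_add_eq_one_of_apply_eq hsym hmono.injOn (add_natCast_div_mem_Ico hξ i.2)
    (add_natCast_div_mem_Ico hξ j.2) h with heq | hsum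
  · rw [div_left_inj' hm0, add_right_inj, Nat.cast_inj] at heq
    exact Fin.ext heq
  · have hk : 2 * ξ = ((m - i - j : ℤ) : ℝ) := by
      field_simp at hsum
      push_cast
      linarith
    rcases eq_zero_or_eq_half_of_two_mul_eq_intCast hξ hk with h | h
    exacts [absurd h h0, absurd h hhalf]

theorem stmt_7 (m : ℕ) (hm : 1 < m) (hodd : Odd m) (f : ℝ → ℝ)
    (hsym : ∀ ξ ∈ Set.Ioo (0:ℝ) 1, f ξ = f (1 - ξ))
    (hmono : StrictAntiOn f (Set.Icc (0:ℝ) (1/2)))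
    (ξ : ℝ) (hξ : ξ ∈ Set.Ico (0:ℝ) 1) (h0 : ξ ≠ 0) (hhalf : ξ ≠ 1/2) :
    Function.Injective (fun i : Fin m => f ((ξ + (i : ℕ)) / m)) :=
  stmt_7_general m f hsym hmono ξ hξ h0 hhalf
end

section
/- Let $w_0,\dots,w_{m-1}$ be distinct complex numbers with $|w_i| \leq 1$, let $x_0,\dots,x_{m-1}$ be nonzero complex numbers, and set $H = \frac{1}{m}V^T \mathrm{diag}(x) V$ where $V$ is the $m\times m$ Vandermonde matrix $V_{k,i} = w_k^i$. Then $\|H^{-1}\|_\infty \geq m \cdot \max_{0\leq i \leq m-1} \frac{\delta_i}{|x_i|}$, where $\delta_i = \prod_{j\neq i} |w_i - w_j|^{-1}$. -/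
/-!
With `V` the Vandermonde matrix of the `w i`, `H⁻¹ * Vᵀ = m • V⁻¹ * diagonal x⁻¹`, so
`(H⁻¹ * Vᵀ) k i = m * (V⁻¹) k i / x i`. The `i`-th column of `V⁻¹` holds the coefficients of the
`i`-th Lagrange basis polynomial, whose leading coefficient is `∏ j ≠ i, (w i - w j)⁻¹`. Since the
entries of `Vᵀ` have modulus at most `1`, every entry of `H⁻¹ * Vᵀ` is bounded by the `ℓ∞`
norm of `H⁻¹`; taking the last row gives the bound for each `i`.
-/

open Matrix

/-- The `ℓ∞` operator norm of a square matrix: maximal absolute row sum. -/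
noncomputable def matInfNorm {m : ℕ} (A : Matrix (Fin m) (Fin m) ℂ) : ℝ :=
  ⨆ i, ∑ j, ‖A i j‖

open Polynomial

theorem Matrix.inv_smul_transpose_mul_diagonal_mul_mul_transpose {n K : Type*} [Fintype n]
    [DecidableEq n] [Field K] {c : K} (hc : c ≠ 0) {V : Matrix n n K} (hV : IsUnit V.det)
    {x : n → K} (hx : ∀ i, x i ≠ 0) :
    (c • (Vᵀ * diagonal x * V))⁻¹ * Vᵀ = c⁻¹ • (V⁻¹ * diagonal x⁻¹) := by
  have hVt : IsUnit Vᵀ.det := by rwa [det_transpose]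
  have hxx : diagonal x * diagonal x⁻¹ = 1 := by
    rw [diagonal_mul_diagonal, ← diagonal_one]
    exact congrArg diagonal (funext fun i => mul_inv_cancel₀ (hx i))
  have hinv : (c • (Vᵀ * diagonal x * V))⁻¹ = c⁻¹ • (V⁻¹ * diagonal x⁻¹ * Vᵀ⁻¹) := by
    apply inv_eq_right_inv
    rw [smul_mul_smul_comm, mul_inv_cancel₀ hc, one_smul]
    simp only [Matrix.mul_assoc]
    rw [mul_nonsing_inv_cancel_left _ _ hV, ← Matrix.mul_assoc (diagonal x), hxx, Matrix.one_mul,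
      mul_nonsing_inv _ hVt]
  rw [hinv, smul_mul_assoc, Matrix.mul_assoc, nonsing_inv_mul _ hVt, Matrix.mul_one]

theorem Matrix.inv_vandermonde_apply {F : Type*} [Field F] {n : ℕ} {v : Fin n → F}
    (hv : Function.Injective v) (k i : Fin n) :
    (vandermonde v)⁻¹ k i = (Lagrange.basis Finset.univ v i).coeff k := by
  set L := Lagrange.basis (Finset.univ : Finset (Fin n)) v
  suffices h : vandermonde v * of (fun (k i : Fin n) => (L i).coeff k) = 1 by
    rw [inv_eq_right_inv h, of_apply]
  ext l i
  have hdeg : (L i).natDegree < n := by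
    rw [Lagrange.natDegree_basis hv.injOn (Finset.mem_univ i), Finset.card_univ, Fintype.card_fin]
    have := i.pos
    omega
  have heval : (vandermonde v * of (fun (k i : Fin n) => (L i).coeff k)) l i =
      (L i).eval (v l) := by
    rw [eval_eq_sum_range' hdeg, ← Fin.sum_univ_eq_sum_range (fun j => _ * v l ^ j)]
    simp only [mul_apply, vandermonde_apply, of_apply, mul_comm]
  rw [heval, one_apply]
  split_ifs with hli
  · rw [hli, Lagrange.eval_basis_self hv.injOn (Finset.mem_univ i)]
  · exact Lagrange.eval_basis_of_ne (Ne.symm hli) (Finset.mem_univ l)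

theorem Matrix.inv_vandermonde_apply_last {F : Type*} [Field F] {n : ℕ} {v : Fin n → F}
    (hv : Function.Injective v) (hn : 0 < n) (i : Fin n) :
    (vandermonde v)⁻¹ ⟨n - 1, by omega⟩ i =
      (∏ j ∈ Finset.univ.erase i, (v i - v j))⁻¹ := by
  rw [inv_vandermonde_apply hv, ← Lagrange.leadingCoeff_basis hv.injOn (Finset.mem_univ i),
    leadingCoeff, Lagrange.natDegree_basis hv.injOn (Finset.mem_univ i), Finset.card_univ,
    Fintype.card_fin]

theorem sum_norm_le_matInfNorm {m : ℕ} (A : Matrix (Fin m) (Fin m) ℂ) (k : Fin m) :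
    ∑ j, ‖A k j‖ ≤ matInfNorm A :=
  le_ciSup (f := fun k => ∑ j, ‖A k j‖) (Set.finite_range _).bddAbove k

theorem norm_mul_apply_le_matInfNorm {m : ℕ} (A B : Matrix (Fin m) (Fin m) ℂ)
    (hB : ∀ j i, ‖B j i‖ ≤ 1) (k i : Fin m) : ‖(A * B) k i‖ ≤ matInfNorm A :=
  calc ‖(A * B) k i‖ ≤ ∑ j, ‖A k j * B j i‖ := by rw [mul_apply]; exact norm_sum_le _ _
    _ ≤ ∑ j, ‖A k j‖ := Finset.sum_le_sum fun j _ => by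
      rw [norm_mul]; exact mul_le_of_le_one_right (norm_nonneg _) (hB j i)
    _ ≤ matInfNorm A := sum_norm_le_matInfNorm A k

theorem stmt_16 (m : ℕ) (hm : 0 < m) (w x : Fin m → ℂ)
    (hw : Function.Injective w) (hwb : ∀ i, ‖w i‖ ≤ 1) (hx : ∀ i, x i ≠ 0)
    (V H : Matrix (Fin m) (Fin m) ℂ) (hV : ∀ k i, V k i = w k ^ (i : ℕ))
    (hH : H = (1 / m : ℂ) • (Vᵀ * Matrix.diagonal x * V)) :
    (m : ℝ) * (⨆ i, (∏ j ∈ Finset.univ.erase i, ‖w i - w j‖)⁻¹ /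
        ‖x i‖) ≤ matInfNorm H⁻¹ := by
  obtain rfl : V = vandermonde w := Matrix.ext hV
  have hVdet : IsUnit (vandermonde w).det := (det_vandermonde_ne_zero_iff.mpr hw).isUnit
  have hm' : (1 / m : ℂ) ≠ 0 := by simp [hm.ne']
  have hHV : H⁻¹ * (vandermonde w)ᵀ = (1 / m : ℂ)⁻¹ • ((vandermonde w)⁻¹ * diagonal x⁻¹) :=
    hH ▸ inv_smul_transpose_mul_diagonal_mul_mul_transpose hm' hVdet hx
  have : Nonempty (Fin m) := ⟨⟨0, hm⟩⟩
  rw [Real.mul_iSup_of_nonneg m.cast_nonneg]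
  refine ciSup_le fun i => ?_
  calc (m : ℝ) * ((∏ j ∈ Finset.univ.erase i, ‖w i - w j‖)⁻¹ / ‖x i‖)
      = ‖(H⁻¹ * (vandermonde w)ᵀ) ⟨m - 1, by omega⟩ i‖ := by
        rw [hHV, Matrix.smul_apply, mul_diagonal, inv_vandermonde_apply_last hw hm]
        simp [norm_prod, div_eq_mul_inv, mul_comm]
    _ ≤ matInfNorm H⁻¹ := norm_mul_apply_le_matInfNorm _ _
        (fun j k => by simpa using pow_le_one₀ (norm_nonneg _) (hwb k)) _ _
end

section
/- Let $m \leq L \leq N - m$, let $w_0,\dots,w_{m-1}$ be distinct complex numbers, $x_0,\dots,x_{m-1}$ nonzero, $h_t = \sum_i w_i^t x_i$, and let $H(s)$ be the $(N-L)\times L$ Hankel matrix with entries $h_{j+k+s}$ for $s \in \{0,1\}$. Then the $L \times L$ matrix $H(0)^+ H(1)$ (where $+$ denotes Moore–Penrose pseudoinverse) has eigenvalues exactly $w_0,\dots,w_{m-1}$ together with $0$ with multiplicity $L - m$. -/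
open Matrix Polynomial

/-! The Hankel matrices factor as `H s = Vᵀ * diagonal (w ^ s * x) * V` through rectangular
Vandermonde matrices of full row rank `m`. Any generalized inverse `P` of `H 0 = A * B`
(with `A` left invertible, `B` right invertible) then satisfies `B * P * A = 1`, so
`P * H 1 = (P * A) * (diagonal w * B)` has the characteristic polynomial of
`diagonal w * B * (P * A) = diagonal w`, padded by `X ^ (L - m)`. -/

namespace Matrix

section GeneralizedInverse

variable {n k l R : Type*} [Fintype n] [Fintype k] [Fintype l] [DecidableEq k] [Ring R]

theorem mul_mul_eq_one_of_mul_mul_mul_eq_self {A : Matrix n k R} {B : Matrix k l R}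
    {A' : Matrix k n R} {B' : Matrix l k R} {P : Matrix l n R}
    (hA : A' * A = 1) (hB : B * B' = 1) (hP : A * B * P * (A * B) = A * B) :
    B * P * A = 1 :=
  calc B * P * A = A' * A * (B * P * A) * (B * B') := by
        rw [hA, hB, Matrix.one_mul, Matrix.mul_one]
    _ = A' * (A * B * P * (A * B)) * B' := by simp only [Matrix.mul_assoc]
    _ = A' * A * (B * B') := by rw [hP]; simp only [Matrix.mul_assoc]
    _ = 1 := by rw [hA, hB, Matrix.one_mul]

end GeneralizedInverse

section Vandermonde

variable {R : Type*} [CommRing R] {m : ℕ}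

theorem rectVandermonde_one_apply (w : Fin m → R) (p : ℕ) (i : Fin m) (j : Fin p) :
    rectVandermonde w 1 p i j = w i ^ (j : ℕ) := by
  simp [rectVandermonde_apply]

theorem sum_pow_add_mul_eq_rectVandermonde (w x : Fin m → R) (s p q : ℕ)
    (j : Fin p) (k : Fin q) :
    ∑ i, w i ^ ((j : ℕ) + k + s) * x i
      = ((rectVandermonde w 1 p)ᵀ * diagonal (fun i => w i ^ s * x i) * rectVandermonde w 1 q)
          j k := by
  rw [mul_apply]
  simp only [mul_diagonal, transpose_apply, rectVandermonde_one_apply, pow_add]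
  refine Finset.sum_congr rfl fun i _ => ?_
  ring

theorem exists_rectVandermonde_mul_eq_one {K : Type*} [Field K] {w : Fin m → K}
    (hw : Function.Injective w) {p : ℕ} (hmp : m ≤ p) :
    ∃ B : Matrix (Fin p) (Fin m) K, rectVandermonde w 1 p * B = 1 := by
  have hsub : rectVandermonde w 1 p * (1 : Matrix (Fin p) (Fin p) K).submatrix id
      (Fin.castLE hmp) = vandermonde w := by
    ext i j
    simp [mul_apply, one_apply, rectVandermonde_one_apply]
  refine ⟨(1 : Matrix (Fin p) (Fin p) K).submatrix id (Fin.castLE hmp) * (vandermonde w)⁻¹, ?_⟩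
  rw [← Matrix.mul_assoc, hsub,
    mul_nonsing_inv _ (Ne.isUnit (det_vandermonde_ne_zero_iff.mpr hw))]

end Vandermonde

end Matrix

theorem stmt_19_general (m L N : ℕ) (hmL : m ≤ L) (hLN : L + m ≤ N)
    (w x : Fin m → ℂ) (hw : Function.Injective w) (hx : ∀ i, x i ≠ 0)
    (h : ℕ → ℂ) (hh : ∀ t : ℕ, h t = ∑ i, w i ^ t * x i)
    (H : ℕ → Matrix (Fin (N - L)) (Fin L) ℂ)
    (hH : ∀ s (j : Fin (N - L)) (k : Fin L), H s j k = h ((j : ℕ) + (k : ℕ) + s))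
    (P : Matrix (Fin L) (Fin (N - L)) ℂ)
    (hP1 : H 0 * P * H 0 = H 0) :
    (P * H 1).charpoly = X ^ (L - m) * ∏ i, (X - C (w i)) := by
  set V₁ := rectVandermonde w 1 (N - L)
  set V₂ := rectVandermonde w 1 L
  have hHankel : ∀ s, H s = V₁ᵀ * diagonal (fun i => w i ^ s * x i) * V₂ := fun s => by
    ext j k
    rw [hH, hh, sum_pow_add_mul_eq_rectVandermonde]
  have hH0 : H 0 = V₁ᵀ * (diagonal x * V₂) := by simp [hHankel, Matrix.mul_assoc]
  have hH1 : H 1 = V₁ᵀ * (diagonal w * (diagonal x * V₂)) := by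
    simp only [hHankel, pow_one, ← diagonal_mul_diagonal, Matrix.mul_assoc]
  obtain ⟨B₁, hB₁⟩ := exists_rectVandermonde_mul_eq_one hw (by omega : m ≤ N - L)
  obtain ⟨B₂, hB₂⟩ := exists_rectVandermonde_mul_eq_one hw hmL
  have hV₁ : B₁ᵀ * V₁ᵀ = 1 := by rw [← transpose_mul, hB₁, transpose_one]
  have hV₂ : diagonal x * V₂ * (B₂ * diagonal x⁻¹) = 1 := by
    rw [Matrix.mul_assoc, ← Matrix.mul_assoc V₂, hB₂, Matrix.one_mul, diagonal_mul_diagonal,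
      ← diagonal_one]
    exact congrArg diagonal (funext fun i => mul_inv_cancel₀ (hx i))
  have hBPA := mul_mul_eq_one_of_mul_mul_mul_eq_self hV₁ hV₂ (hH0 ▸ hP1)
  have hDBPA : diagonal w * (diagonal x * V₂) * (P * V₁ᵀ) = diagonal w := by
    rw [Matrix.mul_assoc, ← Matrix.mul_assoc _ P, hBPA, Matrix.mul_one]
  rw [hH1, ← Matrix.mul_assoc, charpoly_mul_comm_of_le _ _ (by simpa using hmL), hDBPA,
    charpoly_diagonal, Fintype.card_fin, Fintype.card_fin]

theorem stmt_19 (m L N : ℕ) (hmL : m ≤ L) (hLN : L + m ≤ N)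
    (w x : Fin m → ℂ) (hw : Function.Injective w) (hx : ∀ i, x i ≠ 0)
    (h : ℕ → ℂ) (hh : ∀ t : ℕ, h t = ∑ i, w i ^ t * x i)
    (H : ℕ → Matrix (Fin (N - L)) (Fin L) ℂ)
    (hH : ∀ s (j : Fin (N - L)) (k : Fin L), H s j k = h ((j : ℕ) + (k : ℕ) + s))
    (P : Matrix (Fin L) (Fin (N - L)) ℂ)
    (hP1 : H 0 * P * H 0 = H 0) (hP2 : P * H 0 * P = P)
    (hP3 : (H 0 * P)ᴴ = H 0 * P) (hP4 : (P * H 0)ᴴ = P * H 0) :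
    (P * H 1).charpoly = X ^ (L - m) * ∏ i, (X - C (w i)) :=
  stmt_19_general m L N hmL hLN w x hw hx h hh H hH P hP1
end
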